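/- arXiv:1503.01757 — 4 statements merged into one kernel-verified Lean document; each statement's English description precedes it below -/
import Mathlib

section
/- Let $a_1,\dots,a_N$ be integers with each $a_i \ge 2$, and let $h_1,\dots,h_N$ be integers (indices mod $N$, so $h_{N+1}=h_1$) satisfying $1-a_i \le h_i a_i + h_{i+1} \le a_i - 1$ for all $i$. Then it is impossible that $|h_i| \ge 2$ for every $i$. -/
/-- Cyclic system of integers `h i` with `1 - a i ≤ h i * a i + h (i+1) ≤ a i - 1`
    (indices in `ZMod N`, so cyclic). It is impossible that `|h i| ≥ 2` for all `i`. -/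
theorem stmt0 (N : ℕ) (hN : 0 < N) (a h : ZMod N → ℤ)
    (ha : ∀ i, 2 ≤ a i)
    (hineq : ∀ i, 1 - a i ≤ h i * a i + h (i + 1) ∧ h i * a i + h (i + 1) ≤ a i - 1) :
    ¬ (∀ i, 2 ≤ |h i|) := by
  intro habs
  haveI : NeZero N := ⟨hN.ne'⟩
  have key : ∀ i, |h i| < |h (i + 1)| := by
    intro i
    obtain ⟨h1, h2⟩ := hineq i
    have ha' := ha i
    have hi := habs i
    have hsum : |h i * a i + h (i + 1)| ≤ a i - 1 := abs_le.mpr ⟨by linarith, h2⟩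
    have htri : |h i * a i| ≤ |h i * a i + h (i + 1)| + |h (i + 1)| := by
      calc |h i * a i| = |(h i * a i + h (i + 1)) + (-(h (i + 1)))| := by ring_nf
        _ ≤ |h i * a i + h (i + 1)| + |(-(h (i + 1)))| := abs_add_le _ _
        _ = |h i * a i + h (i + 1)| + |h (i + 1)| := by rw [abs_neg]
    have hmul : |h i * a i| = |h i| * a i := by
      rw [abs_mul, abs_of_nonneg (by linarith : (0:ℤ) ≤ a i)]
    nlinarith [abs_nonneg (h (i+1))]
  obtain ⟨i, hi⟩ := Finite.exists_max (fun i : ZMod N => |h i|)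
  exact absurd (hi (i + 1)) (not_le.mpr (key i))
end

section
/- Let $a_1,\dots,a_N$ be integers with each $a_i \ge 2$, and let $h_1,\dots,h_N$ be integers (cyclic, $h_{N+1}=h_1$) satisfying $1-a_i \le h_i a_i + h_{i+1} \le a_i-1$ for all $i$. If some $h_j = 0$, then $h_i = 0$ for all $i$. -/
/-- Cyclic system of integers `h i` with `1 - a i ≤ h i * a i + h (i+1) ≤ a i - 1`.
    If some `h j = 0`, then all `h i = 0`. -/
theorem stmt1 (N : ℕ) (hN : 0 < N) (a h : ZMod N → ℤ)
    (ha : ∀ i, 2 ≤ a i)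
    (hineq : ∀ i, 1 - a i ≤ h i * a i + h (i + 1) ∧ h i * a i + h (i + 1) ≤ a i - 1)
    (j : ZMod N) (hj : h j = 0) :
    ∀ i, h i = 0 := by
  haveI : NeZero N := ⟨hN.ne'⟩
  have key : ∀ i, h (i + 1) = 0 → h i = 0 := by
    intro i h0
    obtain ⟨h1, h2⟩ := hineq i
    rw [h0, add_zero] at h1 h2
    have ha2 := ha i
    have hle : h i ≤ 0 := by nlinarith
    have hge : 0 ≤ h i := by nlinarith
    omega
  have back : ∀ k : ℕ, h (j - (k : ZMod N)) = 0 := by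
    intro k
    induction k with
    | zero => simpa using hj
    | succ n ih =>
      apply key
      have : (j - ((n + 1 : ℕ) : ZMod N)) + 1 = j - (n : ZMod N) := by push_cast; ring
      rw [this]; exact ih
  intro i
  have := back (j - i).val
  rwa [ZMod.natCast_val, ZMod.cast_id, sub_sub_cancel] at this
end

section
/- Let $W = x_1^{a_1}x_2 + \dots + x_{N-1}^{a_{N-1}}x_N + x_N^{a_N}$ be a chain with all $a_i \ge 2$ and $a_N > 2$. Define the weights $q_i = \sum_{j=i}^{N} (-1)^{j-i} \prod_{k=i}^{j} \frac{1}{a_k}$ and $\rho_N^{(i)} = (-1)^{N-i}\prod_{k=i}^{N}\frac{1}{a_k}$. Then for every $i$ with $1 \le i \le N-1$ and every integer $c$ with $|c| \le 2$, the quantity $Y_{i,c} = q_i + c\,\rho_N^{(i)}$ satisfies $0 \le Y_{i,c} < 1$, with $Y_{i,c} = 0$ only when $a_N = 3$, $c = 2$, and $i = N-1$. -/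
noncomputable def Yv (N : ℕ) (a : ℕ → ℤ) (c : ℤ) (i : ℕ) : ℚ :=
  (∑ j ∈ Finset.Icc i N, (-1 : ℚ) ^ (j - i) * ∏ k ∈ Finset.Icc i j, ((a k : ℚ))⁻¹)
    + (c : ℚ) * ((-1 : ℚ) ^ (N - i) * ∏ k ∈ Finset.Icc i N, ((a k : ℚ))⁻¹)

lemma Yv_rec (N : ℕ) (a : ℕ → ℤ) (c : ℤ) (i : ℕ) (h : i < N) :
    Yv N a c i = ((a i : ℚ))⁻¹ * (1 - Yv N a c (i + 1)) := by
  have hins : ∀ j, i + 1 ≤ j → Finset.Icc i j = insert i (Finset.Icc (i + 1) j) := by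
    intro j hj; ext x; simp only [Finset.mem_Icc, Finset.mem_insert]; omega
  have hnot : ∀ j, i ∉ Finset.Icc (i + 1) j := by intro j; simp
  have hQ : (∑ j ∈ Finset.Icc i N, (-1 : ℚ) ^ (j - i) * ∏ k ∈ Finset.Icc i j, ((a k : ℚ))⁻¹)
      = ((a i : ℚ))⁻¹ + (-((a i : ℚ))⁻¹) *
        (∑ j ∈ Finset.Icc (i + 1) N, (-1 : ℚ) ^ (j - (i + 1)) *
          ∏ k ∈ Finset.Icc (i + 1) j, ((a k : ℚ))⁻¹) := by
    rw [hins N h, Finset.sum_insert (hnot N)]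
    simp only [Nat.sub_self, pow_zero, one_mul, Finset.Icc_self, Finset.prod_singleton]
    congr 1
    rw [Finset.mul_sum]
    apply Finset.sum_congr rfl
    intro j hj
    simp only [Finset.mem_Icc] at hj
    rw [hins j hj.1, Finset.prod_insert (hnot j)]
    have hji : j - i = (j - (i + 1)) + 1 := by omega
    rw [hji, pow_succ]
    ring
  have hP : (∏ k ∈ Finset.Icc i N, ((a k : ℚ))⁻¹)
      = ((a i : ℚ))⁻¹ * ∏ k ∈ Finset.Icc (i + 1) N, ((a k : ℚ))⁻¹ := by
    rw [hins N h, Finset.prod_insert (hnot N)]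
  have hNi : N - i = (N - (i + 1)) + 1 := by omega
  unfold Yv
  rw [hQ, hP, hNi, pow_succ]
  ring

lemma Yv_top (N : ℕ) (a : ℕ → ℤ) (c : ℤ) :
    Yv N a c N = (1 + (c : ℚ)) * ((a N : ℚ))⁻¹ := by
  unfold Yv
  simp [Finset.Icc_self]
  ring

lemma Yv_bound (N : ℕ) (a : ℕ → ℤ) (ha : ∀ k, 2 ≤ a k) (haN : 3 ≤ a N)
    (c : ℤ) (hc : |c| ≤ 2) :
    ∀ d i, i + d = N →
      (-1/3 ≤ Yv N a c i ∧ Yv N a c i ≤ 1 ∧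
        (Yv N a c i = 1 → i = N ∧ a N = 3 ∧ c = 2)) := by
  obtain ⟨hc1, hc2⟩ := abs_le.mp hc
  intro d
  induction d with
  | zero =>
    intro i hi
    have hiN : i = N := by omega
    subst hiN
    rw [Yv_top]
    have hx : (3 : ℚ) ≤ (a i : ℚ) := by exact_mod_cast haN
    have hx0 : (0 : ℚ) < (a i : ℚ) := by linarith
    have ht0 : (0 : ℚ) < ((a i : ℚ))⁻¹ := by positivity
    have ht1 : ((a i : ℚ))⁻¹ * (a i : ℚ) = 1 := inv_mul_cancel₀ (ne_of_gt hx0)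
    have hcQ1 : (-2 : ℚ) ≤ (c : ℚ) := by exact_mod_cast hc1
    have hcQ2 : (c : ℚ) ≤ 2 := by exact_mod_cast hc2
    refine ⟨?_, ?_, ?_⟩
    · nlinarith
    · nlinarith
    · intro hY
      have heq : (1 : ℚ) + (c : ℚ) = (a i : ℚ) := by
        field_simp at hY
        linarith [hY]
      have heqZ : (1 : ℤ) + c = a i := by exact_mod_cast heq
      refine ⟨rfl, by omega, by omega⟩
  | succ d ih =>
    intro i hi
    have hlt : i < N := by omega
    have hrec := Yv_rec N a c i hlt
    obtain ⟨h1, h2, _⟩ := ih (i + 1) (by omega)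
    have hai : (2 : ℚ) ≤ (a i : ℚ) := by exact_mod_cast ha i
    have hai0 : (0 : ℚ) < (a i : ℚ) := by linarith
    have ht0 : (0 : ℚ) < ((a i : ℚ))⁻¹ := by positivity
    have ht1 : ((a i : ℚ))⁻¹ * (a i : ℚ) = 1 := inv_mul_cancel₀ (ne_of_gt hai0)
    have hts : ((a i : ℚ))⁻¹ ≤ 1/2 := by
      nlinarith
    have hY1 : 0 ≤ 1 - Yv N a c (i + 1) := by linarith
    have hY2 : 1 - Yv N a c (i + 1) ≤ 4/3 := by linarith
    have hub : Yv N a c i ≤ 2/3 := by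
      rw [hrec]; nlinarith
    have hlb : 0 ≤ Yv N a c i := by
      rw [hrec]; positivity
    exact ⟨by linarith, by linarith, fun hY => absurd hY (by linarith)⟩

/-- Chain bound: for `i` with `1 ≤ i ≤ N-1` and `|c| ≤ 2`, the quantity
    `Y_{i,c} = q_i + c ρ_N^{(i)}` satisfies `0 ≤ Y < 1`, with `Y = 0` only when
    `a N = 3`, `c = 2`, `i = N-1`. -/
theorem stmt4 (N : ℕ) (hN : 1 ≤ N) (a : ℕ → ℤ)
    (ha : ∀ k, 2 ≤ a k) (haN : 3 ≤ a N)
    (i : ℕ) (hi1 : 1 ≤ i) (hi2 : i ≤ N - 1) (c : ℤ) (hc : |c| ≤ 2) :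
    ∀ Y : ℚ,
      Y = (∑ j ∈ Finset.Icc i N, (-1 : ℚ) ^ (j - i) * ∏ k ∈ Finset.Icc i j, ((a k : ℚ))⁻¹)
          + (c : ℚ) * ((-1 : ℚ) ^ (N - i) * ∏ k ∈ Finset.Icc i N, ((a k : ℚ))⁻¹) →
      0 ≤ Y ∧ Y < 1 ∧ (Y = 0 → a N = 3 ∧ c = 2 ∧ i = N - 1) := by
  intro Y hY
  have hYv : Y = Yv N a c i := hY
  have hlt : i < N := by omega
  have hrec := Yv_rec N a c i hlt
  obtain ⟨h1, h2, h3⟩ := Yv_bound N a ha haN c hc (N - (i + 1)) (i + 1) (by omega)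
  have hai : (2 : ℚ) ≤ (a i : ℚ) := by exact_mod_cast ha i
  have hai0 : (0 : ℚ) < (a i : ℚ) := by linarith
  have ht0 : (0 : ℚ) < ((a i : ℚ))⁻¹ := by positivity
  have ht1 : ((a i : ℚ))⁻¹ * (a i : ℚ) = 1 := inv_mul_cancel₀ (ne_of_gt hai0)
  have hts : ((a i : ℚ))⁻¹ ≤ 1/2 := by nlinarith
  have hY1 : 0 ≤ 1 - Yv N a c (i + 1) := by linarith
  have hY2 : 1 - Yv N a c (i + 1) ≤ 4/3 := by linarith
  refine ⟨?_, ?_, ?_⟩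
  · rw [hYv, hrec]; positivity
  · rw [hYv, hrec]; nlinarith
  · intro hY0
    rw [hYv, hrec] at hY0
    have hzero : 1 - Yv N a c (i + 1) = 0 := by
      rcases mul_eq_zero.mp hY0 with h | h
      · exact absurd h (ne_of_gt ht0)
      · exact h
    have : Yv N a c (i + 1) = 1 := by linarith
    obtain ⟨hiN, h3a, h3c⟩ := h3 this
    exact ⟨h3a, h3c, by omega⟩
end

section
/- In the Jacobian ring of a loop polynomial $f = x_1^{a_1}x_N + x_1 x_2^{a_2} + \dots + x_{N-1}x_N^{a_N}$ (relations $a_i x_{i-1}x_i^{a_i-1} = -x_{i+1}^{a_{i+1}}$ with cyclic indices), the element $x_{i-1} x_i^{a_i}$ vanishes for every $i$ (indices mod $N$). -/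
open MvPolynomial in
/-- In the Jacobian ring of the loop polynomial
    `f = ∑_{i=1}^{N} x_{i-1} x_i^{a_i}` (indices cyclic mod `N`, `x_0 = x_N`),
    the element `x_{i-1} x_i^{a_i}` vanishes for every `i`. -/
theorem stmt10 (N : ℕ) (hN : 2 ≤ N) (a : ℕ → ℕ) (ha : ∀ k, 2 ≤ a k)
    (prev : ℕ → ℕ) (hprev : ∀ i, prev i = if i = 1 then N else i - 1)
    (f : MvPolynomial ℕ ℂ)
    (hf : f = ∑ i ∈ Finset.Icc 1 N, X (prev i) * X i ^ a i)
    (i : ℕ) (hi : i ∈ Finset.Icc 1 N) :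
    X (prev i) * X i ^ a i ∈
      Ideal.span ((fun j => MvPolynomial.pderiv j f) '' Set.Icc 1 N) := by
  classical
  obtain ⟨hi1, hiN⟩ := Finset.mem_Icc.mp hi
  set I := Ideal.span ((fun j => MvPolynomial.pderiv j f) '' Set.Icc 1 N) with hI
  set s : ℕ → ℕ := fun j => j % N + 1 with hs
  have hN0 : 0 < N := by omega
  have hsmem : ∀ j, 1 ≤ j → j ≤ N → 1 ≤ s j ∧ s j ≤ N := by
    intro j h1 h2
    have := Nat.mod_lt j hN0
    constructor <;> simp [hs] <;> omega
  have hprevs : ∀ j, 1 ≤ j → j ≤ N → prev (s j) = j := by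
    intro j h1 h2
    rcases eq_or_lt_of_le h2 with rfl | hlt
    · simp [hs, hprev, Nat.mod_self]
    · have hm : j % N = j := Nat.mod_eq_of_lt hlt
      simp only [hs, hm, hprev]
      split <;> omega
  have hsuniq : ∀ j, 1 ≤ j → j ≤ N → ∀ m, 1 ≤ m → m ≤ N → prev m = j → m = s j := by
    intro j h1 h2 m hm1 hm2 hpm
    rw [hprev] at hpm
    by_cases hm : m = 1
    · subst hm
      simp at hpm
      subst hpm
      simp [hs, Nat.mod_self]
    · rw [if_neg hm] at hpm
      have hjlt : j < N := by omega
      simp [hs, Nat.mod_eq_of_lt hjlt]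
      omega
  -- derivative computation
  have hderiv : ∀ j, 1 ≤ j → j ≤ N → pderiv j f
      = C (a j : ℂ) * (X (prev j) * X j ^ (a j - 1)) + X (s j) ^ a (s j) := by
    intro j hj1 hjN
    have hsj := hsmem j hj1 hjN
    rw [hf, map_sum]
    rw [Finset.sum_congr rfl (g := fun m =>
        (if m = j then C (a j : ℂ) * (X (prev j) * X j ^ (a j - 1)) else 0)
        + (if m = s j then (X (s j) ^ a (s j) : MvPolynomial ℕ ℂ) else 0)) ?_]
    · rw [Finset.sum_add_distrib, Finset.sum_ite_eq', Finset.sum_ite_eq',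
        if_pos (Finset.mem_Icc.mpr ⟨hj1, hjN⟩), if_pos (Finset.mem_Icc.mpr hsj)]
    · intro m hm
      obtain ⟨hm1, hmN⟩ := Finset.mem_Icc.mp hm
      by_cases h1 : m = j
      · subst h1
        have hpne : prev m ≠ m := by rw [hprev]; split <;> omega
        have hsne : m ≠ s m := by
          simp only [hs]
          rcases eq_or_lt_of_le hmN with rfl | hlt
          · simp [Nat.mod_self]; omega
          · rw [Nat.mod_eq_of_lt hlt]; omega
        rw [if_pos rfl, if_neg hsne, pderiv_mul, pderiv_X_of_ne hpne, pderiv_pow,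
          pderiv_X_self]
        rw [show ((a m : MvPolynomial ℕ ℂ)) = C (a m : ℂ) from
          (map_natCast (C : ℂ →+* MvPolynomial ℕ ℂ) (a m)).symm]
        ring
      · by_cases h2 : m = s j
        · have hpm : prev m = j := h2 ▸ hprevs j hj1 hjN
          rw [if_neg h1, if_pos h2, pderiv_mul, hpm, pderiv_X_self, pderiv_pow,
            pderiv_X_of_ne (Ne.symm (h2 ▸ (by
              intro hjs
              exact h1 (by rw [← h2] at hjs; omega) : j ≠ s j))), ← h2]
          ring
        · have hpne : prev m ≠ j := fun hpm => h2 (hsuniq j hj1 hjN m hm1 hmN hpm)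
          rw [if_neg h1, if_neg h2, pderiv_mul, pderiv_X_of_ne hpne, pderiv_pow,
            pderiv_X_of_ne (fun h => h1 h), mul_zero, mul_zero, zero_mul, zero_add]
  -- the basic relation in the ideal
  have hrel : ∀ j, 1 ≤ j → j ≤ N →
      C (a j : ℂ) * (X (prev j) * X j ^ a j) + X (prev (s j)) * X (s j) ^ a (s j) ∈ I := by
    intro j hj1 hjN
    have h1 : pderiv j f ∈ I :=
      Ideal.subset_span ⟨j, Set.mem_Icc.mpr ⟨hj1, hjN⟩, rfl⟩
    have h2 := Ideal.mul_mem_left I (X j) h1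
    rw [hderiv j hj1 hjN] at h2
    have hpow : (X j : MvPolynomial ℕ ℂ) ^ a j = X j ^ (a j - 1) * X j := by
      rw [← pow_succ]
      congr 1
      have := ha j
      omega
    rw [hprevs j hj1 hjN]
    convert h2 using 1
    rw [hpow]
    ring
  -- iterate around the loop
  have key : ∀ k : ℕ, ∃ c : ℤ, 2 ^ k ≤ |c| ∧
      X (prev ((i - 1 + k) % N + 1)) * X ((i - 1 + k) % N + 1) ^ a ((i - 1 + k) % N + 1)
        - C ((c : ℂ)) * (X (prev i) * X i ^ a i) ∈ I := by
    intro k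
    induction k with
    | zero =>
      refine ⟨1, by norm_num, ?_⟩
      have hg0 : (i - 1 + 0) % N + 1 = i := by
        rw [Nat.add_zero, Nat.mod_eq_of_lt (by omega)]
        omega
      rw [hg0]
      simp
    | succ k ih =>
      obtain ⟨c, hc, hmem⟩ := ih
      set g := (i - 1 + k) % N + 1 with hg
      have hg1 : 1 ≤ g := by omega
      have hgN : g ≤ N := by
        have := Nat.mod_lt (i - 1 + k) hN0
        omega
      have hgs : (i - 1 + (k + 1)) % N + 1 = s g := by
        simp only [hs, hg]
        rw [show i - 1 + (k + 1) = (i - 1 + k) + 1 by omega]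
        conv_lhs => rw [Nat.add_mod (i - 1 + k) 1 N]
        rw [Nat.mod_eq_of_lt (show 1 < N by omega)]
      refine ⟨-(a g : ℤ) * c, ?_, ?_⟩
      · rw [abs_mul, abs_neg, Int.abs_natCast]
        have h2 : (2 : ℤ) ≤ (a g : ℤ) := by exact_mod_cast ha g
        have h0 : (0 : ℤ) ≤ 2 ^ k := by positivity
        calc (2:ℤ) ^ (k+1) = 2 * 2 ^ k := by ring
        _ ≤ (a g : ℤ) * |c| := by
          apply mul_le_mul h2 hc h0 (by omega)
      · rw [hgs]
        have h2 := hrel g hg1 hgN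
        have h3 := Ideal.sub_mem I h2 (Ideal.mul_mem_left I (C ((a g : ℂ))) hmem)
        convert h3 using 1
        rw [show (((-(a g : ℤ) * c : ℤ) : ℂ)) = -((a g : ℂ) * (c : ℂ)) by push_cast; ring,
          map_neg, map_mul]
        ring
  obtain ⟨c, hc, hmem⟩ := key N
  have hgN : (i - 1 + N) % N + 1 = i := by
    rw [Nat.add_mod_right, Nat.mod_eq_of_lt (by omega)]
    omega
  rw [hgN] at hmem
  have hcne : c ≠ 1 := by
    have h4 : (2:ℤ) ^ 2 ≤ 2 ^ N := by
      apply pow_le_pow_right₀ (by norm_num) hN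
    intro h
    rw [h] at hc
    simp at hc
    omega
  have hne : ((1 : ℂ) - (c : ℂ)) ≠ 0 := by
    intro h
    apply hcne
    have : ((c : ℂ)) = 1 := by linear_combination -h
    exact_mod_cast this
  have hmem2 : (C ((1:ℂ) - (c:ℂ)) : MvPolynomial ℕ ℂ) * (X (prev i) * X i ^ a i) ∈ I := by
    rw [map_sub, map_one]
    convert hmem using 1
    ring
  have hunit : IsUnit (C ((1:ℂ) - (c:ℂ)) : MvPolynomial ℕ ℂ) :=
    (isUnit_iff_ne_zero.mpr hne).map (C : ℂ →+* MvPolynomial ℕ ℂ)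
  obtain ⟨u, hu⟩ := hunit
  have h5 := Ideal.mul_mem_left I (↑u⁻¹) hmem2
  rw [← hu, ← mul_assoc, ← Units.val_mul, inv_mul_cancel] at h5
  simpa using h5
end
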